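/- arXiv:2510.06341 — 2 statements merged into one kernel-verified Lean document; each statement's English description precedes it below -/
import Mathlib

section
/- Let N ≥ 1, r ∈ {0,…,N−1}, k > 0 with T = Nk, let (x_n)_{n=1}^{N} be elements of a real inner product space, and let y_m = x_{m+r+1} − x_{m+1}, so that ‖y_m‖² ≤ 2(‖x_{m+r+1}‖² + ‖x_{m+1}‖²). Then k² Σ_{m=0}^{N−r−1} Σ_{n=m+1}^{m+r} ⟨x_{n+1}, y_m⟩ ≤ 2 T^{1/2} (rk)^{1/2} Σ_{n=0}^{N−1} k ‖x_{n+1}‖². -/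
open Finset

theorem discrete_fubini_translate_estimate
    {H : Type*} [NormedAddCommGroup H] [InnerProductSpace ℝ H]
    (N r : ℕ) (k T C : ℝ) (x : ℕ → H)
    (hN : 1 ≤ N) (hr : r < N) (hk : 0 < k) (hT : T = N * k)
    (hbdd : ∑ n ∈ Finset.range N, k * ‖x (n + 1)‖ ^ 2 ≤ C)
    (hy : ∀ m, ‖x (m + r + 1) - x (m + 1)‖ ^ 2
      ≤ 2 * (‖x (m + r + 1)‖ ^ 2 + ‖x (m + 1)‖ ^ 2)) :
    k ^ 2 * ∑ m ∈ Finset.range (N - r), ∑ n ∈ Finset.Icc (m + 1) (m + r),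
        (inner ℝ (x (n + 1)) (x (m + r + 1) - x (m + 1)) : ℝ)
      ≤ 2 * Real.sqrt T * Real.sqrt (r * k)
        * ∑ n ∈ Finset.range N, k * ‖x (n + 1)‖ ^ 2 := by
  set f : ℕ → ℝ := fun n => ‖x (n + 1)‖ ^ 2 with hf
  set S : ℝ := ∑ n ∈ range N, f n with hS
  have hfnn : ∀ n, 0 ≤ f n := fun n => sq_nonneg _
  have hSnn : 0 ≤ S := Finset.sum_nonneg fun n _ => hfnn n
  set M := N - r with hM
  have hMN : M + r = N := Nat.sub_add_cancel hr.le
  -- shift lemma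
  have shift : ∀ j, j + M ≤ N → ∑ m ∈ range M, f (j + m) ≤ S := by
    intro j hj
    have heq : ∑ m ∈ range M, f (j + m) = ∑ i ∈ Ico j (j + M), f i := by
      rw [Finset.sum_Ico_eq_sum_range]; simp
    rw [heq, hS]
    apply Finset.sum_le_sum_of_subset_of_nonneg
    · intro i hi
      simp only [Finset.mem_Ico] at hi
      exact Finset.mem_range.2 (lt_of_lt_of_le hi.2 hj)
    · intro i _ _; exact hfnn i
  -- termwise bound
  have step1 : ∀ m n, (inner ℝ (x (n + 1)) (x (m + r + 1) - x (m + 1)) : ℝ)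
      ≤ f n + ‖x (m + r + 1) - x (m + 1)‖ ^ 2 / 4 := by
    intro m n
    have h1 := real_inner_le_norm (x (n + 1)) (x (m + r + 1) - x (m + 1))
    have h2 := sq_nonneg (‖x (n + 1)‖ - ‖x (m + r + 1) - x (m + 1)‖ / 2)
    simp only [hf]
    nlinarith
  -- bound A : Fubini on the f part
  have boundA : ∑ m ∈ range M, ∑ n ∈ Icc (m + 1) (m + r), f n ≤ r * S := by
    have hinner : ∀ m, ∑ n ∈ Icc (m + 1) (m + r), f n
        = ∑ j ∈ range r, f ((1 + j) + m) := by
      intro m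
      have : Icc (m + 1) (m + r) = Ico (m + 1) (m + r + 1) := by
        rw [Finset.Ico_add_one_right_eq_Icc]
      rw [this, Finset.sum_Ico_eq_sum_range]
      have : m + r + 1 - (m + 1) = r := by omega
      rw [this]
      apply Finset.sum_congr rfl
      intro j _
      congr 1; omega
    calc ∑ m ∈ range M, ∑ n ∈ Icc (m + 1) (m + r), f n
        = ∑ j ∈ range r, ∑ m ∈ range M, f ((1 + j) + m) := by
          rw [← Finset.sum_comm]
          exact Finset.sum_congr rfl fun m _ => hinner m
      _ ≤ ∑ j ∈ range r, S := by
          apply Finset.sum_le_sum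
          intro j hj
          exact shift (1 + j) (by have := Finset.mem_range.1 hj; omega)
      _ = r * S := by rw [Finset.sum_const, card_range, nsmul_eq_mul]
  -- bound B : the y part
  have boundB : ∑ m ∈ range M, ‖x (m + r + 1) - x (m + 1)‖ ^ 2 ≤ 4 * S := by
    have h1 : ∑ m ∈ range M, ‖x (m + r + 1) - x (m + 1)‖ ^ 2
        ≤ ∑ m ∈ range M, 2 * (f (r + m) + f m) := by
      apply Finset.sum_le_sum
      intro m _
      have := hy m
      simp only [hf]
      have e1 : m + r = r + m := by omega
      rw [show r + m = m + r from by omega]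
      convert this using 3 <;> omega
    have h2 : ∑ m ∈ range M, 2 * (f (r + m) + f m)
        = 2 * ((∑ m ∈ range M, f (r + m)) + ∑ m ∈ range M, f m) := by
      rw [← Finset.sum_add_distrib, Finset.mul_sum]
    have h3 : ∑ m ∈ range M, f (r + m) ≤ S := shift r (by omega)
    have h4 : ∑ m ∈ range M, f m ≤ S := by
      have := shift 0 (by omega)
      simpa using this
    linarith
  -- combine
  have key : ∑ m ∈ range M, ∑ n ∈ Icc (m + 1) (m + r),
      (inner ℝ (x (n + 1)) (x (m + r + 1) - x (m + 1)) : ℝ) ≤ 2 * r * S := by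
    have h1 : ∑ m ∈ range M, ∑ n ∈ Icc (m + 1) (m + r),
        (inner ℝ (x (n + 1)) (x (m + r + 1) - x (m + 1)) : ℝ)
        ≤ ∑ m ∈ range M, ∑ n ∈ Icc (m + 1) (m + r),
          (f n + ‖x (m + r + 1) - x (m + 1)‖ ^ 2 / 4) := by
      apply Finset.sum_le_sum; intro m _
      apply Finset.sum_le_sum; intro n _
      exact step1 m n
    have h2 : ∀ m, ∑ n ∈ Icc (m + 1) (m + r),
        (f n + ‖x (m + r + 1) - x (m + 1)‖ ^ 2 / 4)
        = (∑ n ∈ Icc (m + 1) (m + r), f n)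
          + r * (‖x (m + r + 1) - x (m + 1)‖ ^ 2 / 4) := by
      intro m
      rw [Finset.sum_add_distrib, Finset.sum_const, Nat.card_Icc]
      congr 1
      rw [nsmul_eq_mul]
      congr 1
      norm_cast
      omega
    have h3 : ∑ m ∈ range M, ∑ n ∈ Icc (m + 1) (m + r),
        (f n + ‖x (m + r + 1) - x (m + 1)‖ ^ 2 / 4)
        = (∑ m ∈ range M, ∑ n ∈ Icc (m + 1) (m + r), f n)
          + (r : ℝ) / 4 * ∑ m ∈ range M, ‖x (m + r + 1) - x (m + 1)‖ ^ 2 := by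
      rw [Finset.mul_sum, ← Finset.sum_add_distrib]
      apply Finset.sum_congr rfl
      intro m _
      rw [h2 m]
      ring
    have hB : (r : ℝ) / 4 * ∑ m ∈ range M, ‖x (m + r + 1) - x (m + 1)‖ ^ 2
        ≤ r * S := by
      have hrnn : (0:ℝ) ≤ (r : ℝ) / 4 := by positivity
      calc (r : ℝ) / 4 * ∑ m ∈ range M, ‖x (m + r + 1) - x (m + 1)‖ ^ 2
          ≤ (r : ℝ) / 4 * (4 * S) := by
            apply mul_le_mul_of_nonneg_left boundB hrnn
        _ = r * S := by ring
    calc ∑ m ∈ range M, ∑ n ∈ Icc (m + 1) (m + r),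
        (inner ℝ (x (n + 1)) (x (m + r + 1) - x (m + 1)) : ℝ)
        ≤ (∑ m ∈ range M, ∑ n ∈ Icc (m + 1) (m + r), f n)
          + (r : ℝ) / 4 * ∑ m ∈ range M, ‖x (m + r + 1) - x (m + 1)‖ ^ 2 := by
            rw [← h3]; exact h1
      _ ≤ r * S + r * S := add_le_add boundA hB
      _ = 2 * r * S := by ring
  -- final arithmetic
  have hRHS : ∑ n ∈ Finset.range N, k * ‖x (n + 1)‖ ^ 2 = k * S := by
    rw [hS, Finset.mul_sum]
  rw [hRHS]
  have hrk : (r : ℝ) * k ≤ T := by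
    rw [hT]
    apply mul_le_mul_of_nonneg_right _ hk.le
    exact_mod_cast hr.le
  have hrknn : (0:ℝ) ≤ (r : ℝ) * k := by positivity
  have hsq : Real.sqrt ((r : ℝ) * k) * Real.sqrt ((r : ℝ) * k) = (r : ℝ) * k :=
    Real.mul_self_sqrt hrknn
  have hle : Real.sqrt ((r : ℝ) * k) ≤ Real.sqrt T := Real.sqrt_le_sqrt hrk
  have hsnn : 0 ≤ Real.sqrt ((r : ℝ) * k) := Real.sqrt_nonneg _
  have hkey2 : k ^ 2 * (2 * r * S) ≤ 2 * Real.sqrt T * Real.sqrt ((r:ℝ) * k) * (k * S) := by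
    have h1 : (r : ℝ) * k * (k * S) ≤ Real.sqrt T * Real.sqrt ((r:ℝ) * k) * (k * S) := by
      have h2 : (r : ℝ) * k ≤ Real.sqrt T * Real.sqrt ((r:ℝ) * k) := by
        calc (r : ℝ) * k = Real.sqrt ((r:ℝ) * k) * Real.sqrt ((r:ℝ) * k) := hsq.symm
          _ ≤ Real.sqrt T * Real.sqrt ((r:ℝ) * k) :=
            mul_le_mul_of_nonneg_right hle hsnn
      exact mul_le_mul_of_nonneg_right h2 (by positivity)
    nlinarith
  calc k ^ 2 * ∑ m ∈ range M, ∑ n ∈ Icc (m + 1) (m + r),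
        (inner ℝ (x (n + 1)) (x (m + r + 1) - x (m + 1)) : ℝ)
      ≤ k ^ 2 * (2 * r * S) := by
        apply mul_le_mul_of_nonneg_left key (by positivity)
    _ ≤ 2 * Real.sqrt T * Real.sqrt ((r:ℝ) * k) * (k * S) := hkey2
end

section
/- Let v_1, …, v_I be positive reals and let (c_{ij})_{i<j} be nonpositive reals. Then Σ_{i<j} c_{ij} (v_j − v_i)² / (v_i v_j) ≤ 0, and consequently Σ_{i<j} (−c_{ij}) (v_j − v_i)²/(v_i v_j) ≥ Σ_{i<j} (−c_{ij}) (log v_j − log v_i)². -/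
/-! With `t = log x - log y` one has `(x - y)² / (x y) = x/y + y/x - 2 = 2 (cosh t - 1)`, and
`t² ≤ 2 (cosh t - 1)` because `cosh t - 1 = 2 sinh² (t/2)` and `|s| ≤ |sinh s|`. Each weighted
summand therefore compares termwise, and the sign of every `c_{ij}` settles the first claim. -/

namespace Real

theorem sq_le_sinh_sq (x : ℝ) : x ^ 2 ≤ sinh x ^ 2 := by
  rw [← sq_abs, ← sq_abs (sinh x), abs_sinh]
  exact pow_le_pow_left₀ (abs_nonneg x) (self_le_sinh_iff.2 (abs_nonneg x)) 2

theorem sq_le_two_mul_cosh_sub_one (x : ℝ) : x ^ 2 ≤ 2 * (cosh x - 1) := by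
  have hcosh : cosh x = 1 + 2 * sinh (x / 2) ^ 2 := by
    have h := cosh_two_mul (x / 2)
    rw [mul_div_cancel₀ x two_ne_zero, cosh_sq] at h
    linarith
  nlinarith [sq_le_sinh_sq (x / 2)]

theorem sq_log_sub_log_le {x y : ℝ} (hx : 0 < x) (hy : 0 < y) :
    (log x - log y) ^ 2 ≤ (x - y) ^ 2 / (x * y) :=
  calc (log x - log y) ^ 2 = log (x / y) ^ 2 := by rw [log_div hx.ne' hy.ne']
    _ ≤ 2 * (cosh (log (x / y)) - 1) := sq_le_two_mul_cosh_sub_one _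
    _ = (x - y) ^ 2 / (x * y) := by
      rw [cosh_log (div_pos hx hy)]
      field_simp
      ring

end Real

theorem nodal_log_dissipation (I : ℕ) (v : Fin I → ℝ) (c : Fin I → Fin I → ℝ)
    (hv : ∀ i, 0 < v i) (hc : ∀ i j, i < j → c i j ≤ 0) :
    (∑ p ∈ Finset.univ.filter (fun p : Fin I × Fin I => p.1 < p.2),
        c p.1 p.2 * (v p.2 - v p.1) ^ 2 / (v p.1 * v p.2) ≤ 0) ∧
    (∑ p ∈ Finset.univ.filter (fun p : Fin I × Fin I => p.1 < p.2),
        (-(c p.1 p.2)) * (Real.log (v p.2) - Real.log (v p.1)) ^ 2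
      ≤ ∑ p ∈ Finset.univ.filter (fun p : Fin I × Fin I => p.1 < p.2),
        (-(c p.1 p.2)) * (v p.2 - v p.1) ^ 2 / (v p.1 * v p.2)) := by
  have hcp : ∀ p ∈ Finset.univ.filter (fun p : Fin I × Fin I => p.1 < p.2), c p.1 p.2 ≤ 0 :=
    fun p hp => hc p.1 p.2 (Finset.mem_filter.1 hp).2
  refine ⟨Finset.sum_nonpos fun p hp => ?_, Finset.sum_le_sum fun p hp => ?_⟩
  · exact div_nonpos_of_nonpos_of_nonneg
      (mul_nonpos_of_nonpos_of_nonneg (hcp p hp) (sq_nonneg _)) (mul_pos (hv _) (hv _)).le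
  · rw [mul_div_assoc, mul_comm (v p.1)]
    exact mul_le_mul_of_nonneg_left (Real.sq_log_sub_log_le (hv _) (hv _))
      (neg_nonneg.2 (hcp p hp))
end
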